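/- In the deferred-acceptance stable matching for many-to-one markets with strict preferences and responsive machine preferences, every proposing job is matched to its best achievable partner over all stable assignments; consequently, restricting to a subset T of jobs can only (weakly) improve the assignment of each job in T: v(A^T_i) ≥ v(A*_i) for all i ∈ T. -/
import Mathlib


open Classical

variable {Job Machine : Type*}

/-- The set of jobs assigned to machine `k`. -/
noncomputable def assigned [Fintype Job] (A : Job → Option Machine) (k : Machine) :
    Finset Job :=
  Finset.univ.filter (fun i => A i = some k)

/-- Stability of an assignment `A` of the jobs in `T` (jobs outside `T` are unmatched),
with respect to job values `v` and machine choice functions `Ch`: every machine keeps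
exactly what it would choose from its assigned set, and no job strictly prefers a machine
that would choose it together with its current assignees. -/
def IsStable [Fintype Job] (v : Job → Machine → ℝ)
    (Ch : Machine → Finset Job → Finset Job)
    (T : Finset Job) (A : Job → Option Machine) : Prop :=
  (∀ i, i ∉ T → A i = none) ∧
  (∀ k, Ch k (assigned A k) = assigned A k) ∧
  (∀ i ∈ T, ∀ k, (A i).elim 0 (v i) < v i k → i ∉ Ch k (insert i (assigned A k)))

set_option linter.unusedSectionVars false

namespace DAProof

set_option linter.unusedSectionVars false
variable [Fintype Machine]

/-- best machine outside `R` according to `w`. -/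
noncomputable def prop (w : Machine → ℝ) (R : Finset Machine) : Option Machine :=
  if h : (Rᶜ).Nonempty then some (Finset.exists_max_image Rᶜ w h).choose else none

theorem prop_spec {w : Machine → ℝ} {R : Finset Machine} {k : Machine}
    (h : prop w R = some k) : k ∉ R ∧ ∀ k', k' ∉ R → w k' ≤ w k := by
  unfold prop at h
  split_ifs at h with hne
  · obtain ⟨h1, h2⟩ := (Finset.exists_max_image Rᶜ w hne).choose_spec
    cases h
    exact ⟨Finset.mem_compl.mp h1, fun k' hk' => h2 k' (Finset.mem_compl.mpr hk')⟩

theorem prop_not_mem {w : Machine → ℝ} {R : Finset Machine} {k : Machine}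
    (h : prop w R = some k) : k ∉ R := (prop_spec h).1

theorem prop_exists {w : Machine → ℝ} {R : Finset Machine} {k : Machine}
    (h : k ∉ R) : ∃ k₀, prop w R = some k₀ := by
  unfold prop
  rw [dif_pos ⟨k, Finset.mem_compl.mpr h⟩]
  exact ⟨_, rfl⟩

variable [Fintype Job]
variable (v : Job → Machine → ℝ) (Ch : Machine → Finset Job → Finset Job) (T : Finset Job)

/-- current proposers to machine `k`. -/
noncomputable def PP (R : Job → Finset Machine) (k : Machine) : Finset Job :=
  T.filter (fun i => prop (v i) (R i) = some k)

/-- jobs in `T` that currently propose to `k` or have been rejected by `k`. -/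
noncomputable def QQ (R : Job → Finset Machine) (k : Machine) : Finset Job :=
  T.filter (fun i => prop (v i) (R i) = some k ∨ k ∈ R i)

/-- one round of deferred acceptance: rejected jobs record the rejection. -/
noncomputable def step (R : Job → Finset Machine) : Job → Finset Machine :=
  fun i => R i ∪ Finset.univ.filter
    (fun k => prop (v i) (R i) = some k ∧ i ∉ Ch k (PP v T R k))

theorem subset_step (R : Job → Finset Machine) (i : Job) : R i ⊆ step v Ch T R i :=
  Finset.subset_union_left

theorem mem_step_iff {R : Job → Finset Machine} {i : Job} {k : Machine} :
    k ∈ step v Ch T R i ↔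
      k ∈ R i ∨ (prop (v i) (R i) = some k ∧ i ∉ Ch k (PP v T R k)) := by
  simp [step]

/-- if `i` is not rejected this round, its rejection set (hence proposal) is unchanged. -/
theorem step_eq_self {R : Job → Finset Machine} {i : Job} {k : Machine}
    (hp : prop (v i) (R i) = some k) (hch : i ∈ Ch k (PP v T R k)) :
    step v Ch T R i = R i := by
  apply Finset.Subset.antisymm _ (subset_step v Ch T R i)
  intro k' hk'
  rcases (mem_step_iff v Ch T).mp hk' with h | ⟨h1, h2⟩
  · exact h
  · rw [hp] at h1; cases h1; exact absurd hch h2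

theorem QQ_subset_QQ_step (R : Job → Finset Machine) (k : Machine) :
    QQ v T R k ⊆ QQ v T (step v Ch T R) k := by
  intro j hj
  rw [QQ, Finset.mem_filter] at hj ⊢
  refine ⟨hj.1, ?_⟩
  rcases hj.2 with hp | hr
  · by_cases hch : j ∈ Ch k (PP v T R k)
    · left; rw [step_eq_self v Ch T hp hch]; exact hp
    · right; exact (mem_step_iff v Ch T).mpr (Or.inr ⟨hp, hch⟩)
  · right; exact subset_step v Ch T R j hr

/-- the key choice invariant. -/
theorem inv_step (hsub : ∀ k S, Ch k S ⊆ S)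
    (hsubstitutes : ∀ k (S S' : Finset Job), S' ⊆ S → ∀ i ∈ Ch k S, i ∈ S' → i ∈ Ch k S')
    (hirc : ∀ k (S S' : Finset Job), Ch k S ⊆ S' → S' ⊆ S → Ch k S' = Ch k S)
    {R : Job → Finset Machine}
    (hInv : ∀ k, Ch k (QQ v T R k) = Ch k (PP v T R k)) (k : Machine) :
    Ch k (QQ v T (step v Ch T R) k) = Ch k (PP v T (step v Ch T R) k) := by
  set R' := step v Ch T R with hR'
  have hPQ : PP v T R' k ⊆ QQ v T R' k := by
    intro j hj
    rw [PP, Finset.mem_filter] at hj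
    rw [QQ, Finset.mem_filter]
    exact ⟨hj.1, Or.inl hj.2⟩
  have hCQ : Ch k (QQ v T R' k) ⊆ PP v T R' k := by
    intro j hj
    have hjQ : j ∈ QQ v T R' k := hsub k _ hj
    rw [QQ, Finset.mem_filter] at hjQ
    rcases hjQ.2 with hp | hr
    · rw [PP, Finset.mem_filter]; exact ⟨hjQ.1, hp⟩
    · -- `k ∈ R' j` : either old rejection or new rejection; both contradict
      exfalso
      rcases (mem_step_iff v Ch T).mp hr with hold | ⟨h1, h2⟩
      · -- j ∈ QQ R k, so j chosen from QQ R k = Ch (PP R k) ⊆ PP R k, so prop R j = some k,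
        -- contradicting k ∈ R j
        have hjQR : j ∈ QQ v T R k := by
          rw [QQ, Finset.mem_filter]; exact ⟨hjQ.1, Or.inr hold⟩
        have := hsubstitutes k (QQ v T R' k) (QQ v T R k)
          (QQ_subset_QQ_step v Ch T R k) j hj hjQR
        rw [hInv k] at this
        have hmem := Finset.mem_filter.mp (hsub k (PP v T R k) this)
        exact prop_not_mem hmem.2 hold
      · -- newly rejected: but j ∈ QQ R k and chosen, contradiction with h2
        have hjQR : j ∈ QQ v T R k := by
          rw [QQ, Finset.mem_filter]; exact ⟨hjQ.1, Or.inl h1⟩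
        have := hsubstitutes k (QQ v T R' k) (QQ v T R k)
          (QQ_subset_QQ_step v Ch T R k) j hj hjQR
        rw [hInv k] at this
        exact h2 this
  exact (hirc k _ _ hCQ hPQ).symm


/-- generic finite fixed-point lemma. -/
theorem iterate_fix {α : Type*} (f : α → α) (μ : α → ℕ) (M : ℕ)
    (hbd : ∀ a, μ a ≤ M) (hinc : ∀ a, f a ≠ a → μ a < μ (f a)) (a : α) :
    f (f^[M + 1] a) = f^[M + 1] a := by
  have key : ∀ n, f (f^[n] a) = f^[n] a ∨ n ≤ μ (f^[n] a) := by
    intro n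
    induction n with
    | zero => exact Or.inr (Nat.zero_le _)
    | succ n ih =>
      rcases ih with hf | hμ
      · left
        rw [Function.iterate_succ_apply', hf, hf]
      · by_cases hf : f (f^[n] a) = f^[n] a
        · left; rw [Function.iterate_succ_apply', hf, hf]
        · right
          rw [Function.iterate_succ_apply']
          exact Nat.succ_le_of_lt (lt_of_le_of_lt hμ (hinc _ hf))
  rcases key (M + 1) with h | h
  · exact h
  · exact absurd (le_trans h (hbd _)) (by omega)

theorem step_increasing (R : Job → Finset Machine) (h : step v Ch T R ≠ R) :
    ∑ i, (R i).card < ∑ i, (step v Ch T R i).card := by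
  obtain ⟨i, hi⟩ := Function.ne_iff.mp h
  apply Finset.sum_lt_sum
  · intro j _
    exact Finset.card_le_card (subset_step v Ch T R j)
  · exact ⟨i, Finset.mem_univ i,
      Finset.card_lt_card ((subset_step v Ch T R i).ssubset_of_ne (Ne.symm hi))⟩

/-- the final rejection sets of deferred acceptance on market `T`. -/
noncomputable def Rinf : Job → Finset Machine :=
  (step v Ch T)^[Fintype.card Job * Fintype.card Machine + 1] (fun _ => ∅)

theorem Rinf_fixed : step v Ch T (Rinf v Ch T) = Rinf v Ch T := by
  apply iterate_fix (step v Ch T) (fun R => ∑ i, (R i).card)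
  · intro R
    calc ∑ i, (R i).card ≤ ∑ _i : Job, Fintype.card Machine :=
          Finset.sum_le_sum (fun i _ => Finset.card_le_card (Finset.subset_univ _) |>.trans
            (le_of_eq (Finset.card_univ)))
      _ = Fintype.card Job * Fintype.card Machine := by
          rw [Finset.sum_const, Finset.card_univ, smul_eq_mul]
  · exact fun R h => step_increasing v Ch T R h

theorem Rinf_inv (hsub : ∀ k S, Ch k S ⊆ S)
    (hsubstitutes : ∀ k (S S' : Finset Job), S' ⊆ S → ∀ i ∈ Ch k S, i ∈ S' → i ∈ Ch k S')
    (hirc : ∀ k (S S' : Finset Job), Ch k S ⊆ S' → S' ⊆ S → Ch k S' = Ch k S) :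
    ∀ k, Ch k (QQ v T (Rinf v Ch T) k) = Ch k (PP v T (Rinf v Ch T) k) := by
  rw [Rinf]
  generalize Fintype.card Job * Fintype.card Machine + 1 = n
  induction n with
  | zero =>
    intro k
    simp only [Function.iterate_zero, id_eq]
    congr 1
    rw [QQ, PP]
    apply Finset.filter_congr
    intro i _
    simp
  | succ n ih =>
    rw [Function.iterate_succ_apply']
    exact inv_step v Ch T hsub hsubstitutes hirc ih

/-- any machine that ever rejects a job `i ∈ T` is strictly better (for `i`) than
`i`'s partner in any stable assignment of any superset market `T'`. -/
theorem Rinf_opt (hpos : ∀ i k, 0 < v i k)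
    (hstrict : ∀ i (k k' : Machine), k ≠ k' → v i k ≠ v i k')
    (hsub : ∀ k S, Ch k S ⊆ S)
    (hsubstitutes : ∀ k (S S' : Finset Job), S' ⊆ S → ∀ i ∈ Ch k S, i ∈ S' → i ∈ Ch k S')
    (hirc : ∀ k (S S' : Finset Job), Ch k S ⊆ S' → S' ⊆ S → Ch k S' = Ch k S)
    (T' : Finset Job) (hTT' : T ⊆ T') (A : Job → Option Machine)
    (hA : IsStable v Ch T' A) :
    ∀ i ∈ T, ∀ k ∈ Rinf v Ch T i, (A i).elim 0 (v i) < v i k := by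
  obtain ⟨hA1, hA2, hA3⟩ := hA
  rw [Rinf]
  generalize Fintype.card Job * Fintype.card Machine + 1 = n
  induction n with
  | zero => intro i _ k hk; simp at hk
  | succ n ih =>
    rw [Function.iterate_succ_apply']
    set R := (step v Ch T)^[n] (fun _ => ∅) with hR
    intro i hiT k hk
    rcases (mem_step_iff v Ch T).mp hk with hold | ⟨hp, hrej⟩
    · exact ih i hiT k hold
    -- new rejection of i by k; show A i is worse than k
    by_contra hcon
    push_neg at hcon
    -- A i must be some k' with v i k ≤ v i k'
    obtain ⟨k', hk'⟩ : ∃ k', A i = some k' := by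
      cases hAi : A i with
      | none => rw [hAi] at hcon; simp at hcon; exact absurd (hpos i k) (not_lt.mpr hcon)
      | some k' => exact ⟨k', rfl⟩
    rw [hk'] at hcon
    simp only [Option.elim_some] at hcon
    -- k' ∉ R i (else ih gives v i k' < v i k')
    have hk'R : k' ∉ R i := by
      intro hmem
      have := ih i hiT k' hmem
      rw [hk'] at this
      simp at this
    -- so v i k' ≤ v i k by maximality of prop, hence k' = k
    have hle := (prop_spec hp).2 k' hk'R
    have hkk' : k' = k := by
      by_contra hne
      exact hstrict i k' k hne (le_antisymm hle hcon)
    rw [hkk'] at hk'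
    -- now A i = some k; let S = assigned A k, derive contradiction
    set S := assigned A k with hS
    have hiS : i ∈ S := by
      rw [hS, assigned, Finset.mem_filter]
      exact ⟨Finset.mem_univ i, hk'⟩
    have hiP : i ∈ PP v T R k := by
      rw [PP, Finset.mem_filter]; exact ⟨hiT, hp⟩
    -- every chosen job from PP ∪ S is in S
    have hCh_sub : Ch k (PP v T R k ∪ S) ⊆ S := by
      intro j hj
      by_contra hjS
      have hjPS : j ∈ PP v T R k ∪ S := hsub k _ hj
      have hjP : j ∈ PP v T R k := by
        rcases Finset.mem_union.mp hjPS with h | h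
        · exact h
        · exact absurd h hjS
      rw [PP, Finset.mem_filter] at hjP
      obtain ⟨hjT, hjp⟩ := hjP
      -- j strictly prefers k to A j
      have hjlt : (A j).elim 0 (v j) < v j k := by
        cases hAj : A j with
        | none => simpa using hpos j k
        | some k'' =>
          simp only [Option.elim_some]
          have hk''R : k'' ∉ R j := by
            intro hmem
            have := ih j hjT k'' hmem
            rw [hAj] at this
            simp at this
          have hle'' := (prop_spec hjp).2 k'' hk''R
          have hne : k'' ≠ k := by
            intro h; subst h
            apply hjS
            rw [hS, assigned, Finset.mem_filter]
            exact ⟨Finset.mem_univ j, hAj⟩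
          exact lt_of_le_of_ne hle'' (hstrict j k'' k hne)
      have hnotCh := hA3 j (hTT' hjT) k hjlt
      apply hnotCh
      apply hsubstitutes k (PP v T R k ∪ S) (insert j S) _ j hj (Finset.mem_insert_self j S)
      intro x hx
      rcases Finset.mem_insert.mp hx with h | h
      · subst h; exact Finset.mem_union_left _ (Finset.mem_filter.mpr ⟨hjT, hjp⟩)
      · exact Finset.mem_union_right _ h
    -- IRC: Ch k S = Ch k (PP ∪ S) = S, so i chosen from PP ∪ S, so chosen from PP: contra
    have h2 : Ch k S = S := by rw [hS]; exact hA2 k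
    have h1 : Ch k (PP v T R k ∪ S) = S :=
      (hirc k (PP v T R k ∪ S) S hCh_sub Finset.subset_union_right).symm.trans h2
    have hiCh : i ∈ Ch k (PP v T R k ∪ S) := by rw [h1]; exact hiS
    exact hrej (hsubstitutes k (PP v T R k ∪ S) (PP v T R k)
      Finset.subset_union_left i hiCh hiP)


/-- the deferred-acceptance outcome on market `T`. -/
noncomputable def DA : Job → Option Machine :=
  fun i => if i ∈ T then prop (v i) (Rinf v Ch T i) else none

theorem assigned_DA (k : Machine) :
    assigned (DA v Ch T) k = PP v T (Rinf v Ch T) k := by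
  ext i
  rw [assigned, PP, Finset.mem_filter, Finset.mem_filter, DA]
  by_cases h : i ∈ T <;> simp [h]

theorem DA_stable (hsub : ∀ k S, Ch k S ⊆ S)
    (hsubstitutes : ∀ k (S S' : Finset Job), S' ⊆ S → ∀ i ∈ Ch k S, i ∈ S' → i ∈ Ch k S')
    (hirc : ∀ k (S S' : Finset Job), Ch k S ⊆ S' → S' ⊆ S → Ch k S' = Ch k S) :
    IsStable v Ch T (DA v Ch T) := by
  have hfix := Rinf_fixed v Ch T
  set R := Rinf v Ch T with hR
  have hPfix : ∀ k, Ch k (PP v T R k) = PP v T R k := by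
    intro k
    apply Finset.Subset.antisymm (hsub k _)
    intro i hi
    by_contra hich
    have hiP := hi
    rw [PP, Finset.mem_filter] at hiP
    have hk : k ∈ step v Ch T R i :=
      (mem_step_iff v Ch T).mpr (Or.inr ⟨hiP.2, hich⟩)
    rw [hfix] at hk
    exact prop_not_mem hiP.2 hk
  refine ⟨fun i hi => by rw [DA, if_neg hi], ?_, ?_⟩
  · intro k
    rw [assigned_DA]
    exact hPfix k
  · intro i hiT k hlt
    rw [assigned_DA]
    rw [DA, if_pos hiT] at hlt
    have hkR : k ∈ R i := by
      by_contra hkR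
      obtain ⟨k₀, hk₀⟩ := prop_exists (w := v i) hkR
      rw [hk₀] at hlt
      simp only [Option.elim_some] at hlt
      exact absurd ((prop_spec hk₀).2 k hkR) (not_le.mpr hlt)
    have hinv := Rinf_inv v Ch T hsub hsubstitutes hirc k
    rw [← hR] at hinv
    have hiQ : i ∈ QQ v T R k := by
      rw [QQ, Finset.mem_filter]; exact ⟨hiT, Or.inr hkR⟩
    have hiP : i ∉ PP v T R k := by
      intro h
      rw [PP, Finset.mem_filter] at h
      exact prop_not_mem h.2 hkR
    have hsub1 : insert i (PP v T R k) ⊆ QQ v T R k := by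
      intro x hx
      rcases Finset.mem_insert.mp hx with h | h
      · subst h; exact hiQ
      · rw [PP, Finset.mem_filter] at h
        rw [QQ, Finset.mem_filter]
        exact ⟨h.1, Or.inl h.2⟩
    have hsub2 : Ch k (QQ v T R k) ⊆ insert i (PP v T R k) := by
      rw [hinv, hPfix k]
      exact Finset.subset_insert _ _
    have := hirc k (QQ v T R k) (insert i (PP v T R k)) hsub2 hsub1
    rw [this, hinv, hPfix k]
    exact hiP

theorem DA_opt (hpos : ∀ i k, 0 < v i k)
    (hstrict : ∀ i (k k' : Machine), k ≠ k' → v i k ≠ v i k')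
    (hsub : ∀ k S, Ch k S ⊆ S)
    (hsubstitutes : ∀ k (S S' : Finset Job), S' ⊆ S → ∀ i ∈ Ch k S, i ∈ S' → i ∈ Ch k S')
    (hirc : ∀ k (S S' : Finset Job), Ch k S ⊆ S' → S' ⊆ S → Ch k S' = Ch k S)
    (T' : Finset Job) (hTT' : T ⊆ T') (A : Job → Option Machine)
    (hA : IsStable v Ch T' A) :
    ∀ i ∈ T, (A i).elim 0 (v i) ≤ (DA v Ch T i).elim 0 (v i) := by
  intro i hiT
  rw [DA, if_pos hiT]
  cases hAi : A i with
  | none =>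
    simp only [Option.elim_none]
    cases hp : prop (v i) (Rinf v Ch T i) with
    | none => simp
    | some k₀ => simpa using le_of_lt (hpos i k₀)
  | some k' =>
    simp only [Option.elim_some]
    have hk'R : k' ∉ Rinf v Ch T i := by
      intro hmem
      have := Rinf_opt v Ch T hpos hstrict hsub hsubstitutes hirc T' hTT' A hA i hiT k' hmem
      rw [hAi] at this
      simp at this
    obtain ⟨k₀, hk₀⟩ := prop_exists (w := v i) hk'R
    rw [hk₀]
    simpa using (prop_spec hk₀).2 k' hk'R

end DAProof

/-- In a many-to-one market with strict job preferences (given by values `v`, all machines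
acceptable) and machine choice functions `Ch` that pick, from any set of proposals, the
most preferred feasible subset (formalized by the substitutes and irrelevance-of-rejected
conditions), deferred acceptance yields a job-optimal stable assignment `A*`; moreover,
restricting the market to any subset `T` of the jobs yields a job-optimal stable
assignment `A^T` that every job of `T` weakly prefers to `A*`. -/
theorem stmt15 [Fintype Job] [Fintype Machine]
    (v : Job → Machine → ℝ) (hpos : ∀ i k, 0 < v i k)
    (hstrict : ∀ i (k k' : Machine), k ≠ k' → v i k ≠ v i k')
    (Ch : Machine → Finset Job → Finset Job)
    (hsub : ∀ k S, Ch k S ⊆ S)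
    (hsubstitutes : ∀ k (S S' : Finset Job), S' ⊆ S → ∀ i ∈ Ch k S, i ∈ S' → i ∈ Ch k S')
    (hirc : ∀ k (S S' : Finset Job), Ch k S ⊆ S' → S' ⊆ S → Ch k S' = Ch k S) :
    ∃ Astar : Job → Option Machine,
      IsStable v Ch Finset.univ Astar ∧
      (∀ A, IsStable v Ch Finset.univ A →
        ∀ i, (A i).elim 0 (v i) ≤ (Astar i).elim 0 (v i)) ∧
      ∀ T : Finset Job,
        ∃ AT : Job → Option Machine,
          IsStable v Ch T AT ∧
          (∀ A, IsStable v Ch T A →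
            ∀ i ∈ T, (A i).elim 0 (v i) ≤ (AT i).elim 0 (v i)) ∧
          ∀ i ∈ T, (Astar i).elim 0 (v i) ≤ (AT i).elim 0 (v i) := by
  refine ⟨DAProof.DA v Ch Finset.univ,
    DAProof.DA_stable v Ch Finset.univ hsub hsubstitutes hirc, ?_, ?_⟩
  · intro A hA i
    exact DAProof.DA_opt v Ch Finset.univ hpos hstrict hsub hsubstitutes hirc
      Finset.univ (le_refl _) A hA i (Finset.mem_univ i)
  · intro T
    refine ⟨DAProof.DA v Ch T, DAProof.DA_stable v Ch T hsub hsubstitutes hirc, ?_, ?_⟩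
    · intro A hA i hiT
      exact DAProof.DA_opt v Ch T hpos hstrict hsub hsubstitutes hirc
        T (le_refl _) A hA i hiT
    · intro i hiT
      exact DAProof.DA_opt v Ch T hpos hstrict hsub hsubstitutes hirc
        Finset.univ (Finset.subset_univ T) (DAProof.DA v Ch Finset.univ)
        (DAProof.DA_stable v Ch Finset.univ hsub hsubstitutes hirc) i hiT
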